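/- Let W ∈ ℝ^{n×n} be symmetric positive definite, (S_j, q_j)_{j=1}^m a finitely supported sketch distribution, f_1,…,f_n : ℝ^d → ℝ differentiable with f := (1/n)∑_i f_i, and x* ∈ ℝ^d. Let κ := λmin(W^{1/2}(∑_j q_j H_{S_j})W^{1/2}), and assume the expected smoothness of the Jacobian: there is L₂ > 0 such that ∑_j q_j ‖(∇F(x) − ∇F(x*)) Π_{S_j}‖²_{W⁻¹} ≤ 2L₂ (f(x) − f(x*)) for all x ∈ ℝ^d. Then for every J ∈ ℝ^{d×n} and every x ∈ ℝ^d, the Jacobian estimates J⁺_j := J(I − Π_{S_j}) + ∇F(x)Π_{S_j} satisfy ∑_j q_j ‖J⁺_j − ∇F(x*)‖²_{W⁻¹} ≤ (1 − κ)‖J − ∇F(x*)‖²_{W⁻¹} + 2L₂ (f(x) − f(x*)). -/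

import Mathlib

open Matrix

/-- Weighted Frobenius norm squared: ‖X‖²_{W⁻¹} = Tr(X W⁻¹ Xᵀ). -/
noncomputable def wnorm2 {d n : ℕ} (W : Matrix (Fin n) (Fin n) ℝ)
    (X : Matrix (Fin d) (Fin n) ℝ) : ℝ :=
  Matrix.trace (X * W⁻¹ * Xᵀ)

/-- Smallest eigenvalue of a (symmetric) real matrix, as the infimum of its real spectrum. -/
noncomputable def lammin {n : ℕ} (M : Matrix (Fin n) (Fin n) ℝ) : ℝ :=
  sInf (spectrum ℝ M)

/-- The (Euclidean) gradient of `f : ℝ^d → ℝ` at `x`, i.e. the vector of partial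
derivatives. -/
noncomputable def grad {d : ℕ} (f : (Fin d → ℝ) → ℝ) (x : Fin d → ℝ) : Fin d → ℝ :=
  fun k => fderiv ℝ f x (Pi.single k 1)

/-- The Jacobian `∇F(x) = [∇f₁(x), …, ∇fₙ(x)] ∈ ℝ^{d×n}`. -/
noncomputable def jac {d n : ℕ} (f : Fin n → (Fin d → ℝ) → ℝ) (x : Fin d → ℝ) :
    Matrix (Fin d) (Fin n) ℝ :=
  Matrix.of fun k i => grad (f i) x k

/-! Write `R = J - ∇F(x*)` and `D = ∇F(x) - ∇F(x*)`, so that `J⁺ⱼ - ∇F(x*) = R(I - Πⱼ) + DΠⱼ`.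
Since `Πⱼ = HⱼW` with `Hⱼ` symmetric and `HⱼWHⱼ = Hⱼ`, the cross term vanishes in the
`W⁻¹`-inner product and `‖R(I - Πⱼ)‖² = ‖R‖² - Tr(RHⱼRᵀ)`. Averaging over `j` gives
`Tr(R H̄ Rᵀ)` with `H̄ = ∑ qⱼHⱼ`, which is at least `κ‖R‖²` by the Rayleigh bound for
`W^{1/2} H̄ W^{1/2}` applied to the rows of `RW^{-1/2}`; the `D`-terms are bounded by the
expected smoothness. -/

lemma isSymm_mul_mul_transpose {α n τ : Type*} [CommRing α] [Fintype τ] {A : Matrix τ τ α}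
    (hA : A.IsSymm) (S : Matrix n τ α) :
    (S * A * Sᵀ).IsSymm := by
  simp only [IsSymm, transpose_mul, transpose_transpose, hA.eq, Matrix.mul_assoc]

lemma isSymm_mul_inv_mul_transpose {α n τ : Type*} [CommRing α] [Fintype n] [Fintype τ]
    [DecidableEq τ] {W : Matrix n n α} (hW : W.IsSymm) (S : Matrix n τ α) :
    (S * (Sᵀ * W * S)⁻¹ * Sᵀ).IsSymm :=
  isSymm_mul_mul_transpose (isSymm_mul_mul_transpose hW Sᵀ).inv S

lemma mul_inv_mul_transpose_mul_mul_self {α n τ : Type*} [CommRing α] [Fintype n] [Fintype τ]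
    [DecidableEq τ] {W : Matrix n n α} {S : Matrix n τ α} (hS : IsUnit (Sᵀ * W * S)) :
    S * (Sᵀ * W * S)⁻¹ * Sᵀ * W * (S * (Sᵀ * W * S)⁻¹ * Sᵀ) = S * (Sᵀ * W * S)⁻¹ * Sᵀ := by
  have hinv : (Sᵀ * W * S)⁻¹ * (Sᵀ * W * S) = 1 :=
    nonsing_inv_mul _ ((isUnit_iff_isUnit_det _).mp hS)
  calc S * (Sᵀ * W * S)⁻¹ * Sᵀ * W * (S * (Sᵀ * W * S)⁻¹ * Sᵀ)
      = S * ((Sᵀ * W * S)⁻¹ * (Sᵀ * W * S)) * (Sᵀ * W * S)⁻¹ * Sᵀ := by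
        simp only [Matrix.mul_assoc]
    _ = S * (Sᵀ * W * S)⁻¹ * Sᵀ := by rw [hinv, Matrix.mul_one]

lemma wnorm2_mul_one_sub_add_mul {d n : ℕ} {W H : Matrix (Fin n) (Fin n) ℝ} (hW : W.IsSymm)
    (hWdet : IsUnit W.det) (hH : H.IsSymm) (hHWH : H * W * H = H)
    (R D : Matrix (Fin d) (Fin n) ℝ) :
    wnorm2 W (R * (1 - H * W) + D * (H * W))
      = wnorm2 W R - (R * H * Rᵀ).trace + wnorm2 W (D * (H * W)) := by
  have hWW : ∀ {k : ℕ} (Z : Matrix (Fin n) (Fin k) ℝ), W * (W⁻¹ * Z) = Z := fun Z => by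
    rw [← Matrix.mul_assoc, mul_nonsing_inv _ hWdet, Matrix.one_mul]
  have hWW' : ∀ {k : ℕ} (Z : Matrix (Fin n) (Fin k) ℝ), W⁻¹ * (W * Z) = Z := fun Z => by
    rw [← Matrix.mul_assoc, nonsing_inv_mul _ hWdet, Matrix.one_mul]
  have hHWH' : ∀ {k : ℕ} (Z : Matrix (Fin n) (Fin k) ℝ), H * (W * (H * Z)) = H * Z := fun Z => by
    rw [← Matrix.mul_assoc, ← Matrix.mul_assoc, hHWH]
  unfold wnorm2
  simp only [transpose_add, transpose_mul, transpose_sub, hW.eq, hH.eq,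
    Matrix.sub_mul, Matrix.mul_sub, Matrix.add_mul, Matrix.mul_add, Matrix.mul_one,
    Matrix.mul_assoc, hWW, hWW', hHWH', trace_add, trace_sub]
  ring

lemma wnorm2_sketch_update_sub {d n : ℕ} {τ : Type*} [Fintype τ] [DecidableEq τ]
    {W H : Matrix (Fin n) (Fin n) ℝ} (hW : W.PosDef) {S : Matrix (Fin n) τ ℝ}
    (hS : IsUnit (Sᵀ * W * S)) (hH : H = S * (Sᵀ * W * S)⁻¹ * Sᵀ)
    (J G G' : Matrix (Fin d) (Fin n) ℝ) :
    wnorm2 W (J * (1 - H * W) + G * (H * W) - G')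
      = wnorm2 W (J - G') - ((J - G') * H * (J - G')ᵀ).trace + wnorm2 W ((G - G') * (H * W)) := by
  have hWsymm : W.IsSymm := isHermitian_iff_isSymm.mp hW.isHermitian
  rw [← wnorm2_mul_one_sub_add_mul hWsymm hW.det_pos.ne'.isUnit
    (hH ▸ isSymm_mul_inv_mul_transpose hWsymm S) (hH ▸ mul_inv_mul_transpose_mul_mul_self hS)]
  congr 1
  simp only [Matrix.mul_sub, Matrix.sub_mul, Matrix.mul_one]
  abel

lemma posSemidef_sub_lammin_smul_one {n : ℕ} {M : Matrix (Fin n) (Fin n) ℝ} (hM : M.IsSymm) :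
    (M - lammin M • (1 : Matrix (Fin n) (Fin n) ℝ)).PosSemidef := by
  refine posSemidef_iff_isHermitian_and_spectrum_nonneg.mpr
    ⟨isHermitian_iff_isSymm.mpr (hM.sub (isSymm_one.smul _)), ?_⟩
  rw [← Algebra.algebraMap_eq_smul_one, ← spectrum.sub_singleton_eq]
  rintro _ ⟨μ, hμ, _, rfl, rfl⟩
  exact sub_nonneg.mpr (csInf_le finite_real_spectrum.bddBelow hμ)

lemma lammin_mul_trace_le {d n : ℕ} {M : Matrix (Fin n) (Fin n) ℝ} (hM : M.IsSymm)
    (A : Matrix (Fin d) (Fin n) ℝ) :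
    lammin M * (A * Aᵀ).trace ≤ (A * M * Aᵀ).trace := by
  have h := ((posSemidef_sub_lammin_smul_one hM).mul_mul_conjTranspose_same A).trace_nonneg
  rw [conjTranspose_eq_transpose_of_trivial, Matrix.mul_sub, Matrix.sub_mul, Matrix.mul_smul,
    Matrix.smul_mul, Matrix.mul_one, trace_sub, trace_smul, smul_eq_mul] at h
  linarith

lemma lammin_conj_mul_wnorm2_le {d n : ℕ} {W Wh M : Matrix (Fin n) (Fin n) ℝ}
    (hWh : Wh.IsSymm) (hWhdet : IsUnit Wh.det) (hWh2 : Wh * Wh = W) (hM : M.IsSymm)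
    (R : Matrix (Fin d) (Fin n) ℝ) :
    lammin (Wh * M * Wh) * wnorm2 W R ≤ (R * M * Rᵀ).trace := by
  have hconj : (Wh * M * Wh).IsSymm := by
    simpa only [hWh.eq] using isSymm_mul_mul_transpose hM Wh
  have hcancel : ∀ {k : ℕ} (Z : Matrix (Fin n) (Fin k) ℝ), Wh⁻¹ * (Wh * Z) = Z := fun Z => by
    rw [← Matrix.mul_assoc, nonsing_inv_mul _ hWhdet, Matrix.one_mul]
  have hcancel' : ∀ {k : ℕ} (Z : Matrix (Fin n) (Fin k) ℝ), Wh * (Wh⁻¹ * Z) = Z := fun Z => by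
    rw [← Matrix.mul_assoc, mul_nonsing_inv _ hWhdet, Matrix.one_mul]
  have hWinv : W⁻¹ = Wh⁻¹ * Wh⁻¹ := by rw [← hWh2, Matrix.mul_inv_rev]
  have h := lammin_mul_trace_le hconj (R * Wh⁻¹)
  simp only [transpose_mul, hWh.inv.eq, Matrix.mul_assoc, hcancel, hcancel'] at h
  simpa only [wnorm2, hWinv, Matrix.mul_assoc] using h

theorem jacobian_estimate_contraction_general
    {d n m : ℕ}
    (W Wh : Matrix (Fin n) (Fin n) ℝ) (hW : W.PosDef)
    (hWh : Wh.PosDef) (hWh2 : Wh * Wh = W)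
    (τs : Fin m → ℕ) (S : ∀ j, Matrix (Fin n) (Fin (τs j)) ℝ)
    (hS : ∀ j, IsUnit ((S j)ᵀ * W * S j))
    (q : Fin m → ℝ) (hq1 : ∑ j, q j = 1)
    (Pr H : Fin m → Matrix (Fin n) (Fin n) ℝ)
    (hPr : ∀ j, Pr j = S j * ((S j)ᵀ * W * S j)⁻¹ * (S j)ᵀ * W)
    (hH : ∀ j, H j = S j * ((S j)ᵀ * W * S j)⁻¹ * (S j)ᵀ)
    (f : Fin n → (Fin d → ℝ) → ℝ)
    (fbar : (Fin d → ℝ) → ℝ)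
    (xs : Fin d → ℝ)
    (κ : ℝ) (hκ : κ = lammin (Wh * (∑ j, q j • H j) * Wh))
    (L₂ : ℝ)
    (hES2 : ∀ x : Fin d → ℝ,
      ∑ j, q j * wnorm2 W ((jac f x - jac f xs) * Pr j)
        ≤ 2 * L₂ * (fbar x - fbar xs)) :
    ∀ (J : Matrix (Fin d) (Fin n) ℝ) (x : Fin d → ℝ),
      ∑ j, q j * wnorm2 W (J * (1 - Pr j) + jac f x * Pr j - jac f xs)
        ≤ (1 - κ) * wnorm2 W (J - jac f xs) + 2 * L₂ * (fbar x - fbar xs) := by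
  intro J x
  set R := J - jac f xs
  set D := jac f x - jac f xs
  have hPrH : ∀ j, Pr j = H j * W := fun j => by rw [hPr j, hH j]
  have hupdate : ∀ j, wnorm2 W (J * (1 - Pr j) + jac f x * Pr j - jac f xs)
      = wnorm2 W R - (R * H j * Rᵀ).trace + wnorm2 W (D * Pr j) := fun j => by
    rw [hPrH j]
    exact wnorm2_sketch_update_sub hW (hS j) (hH j) J (jac f x) (jac f xs)
  have hmean : ∑ j, q j * (R * H j * Rᵀ).trace = (R * (∑ j, q j • H j) * Rᵀ).trace := by
    simp only [Matrix.mul_sum, Matrix.sum_mul, trace_sum, Matrix.mul_smul, Matrix.smul_mul,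
      trace_smul, smul_eq_mul]
  have hmeanSymm : (∑ j, q j • H j).IsSymm := by
    have hWsymm : W.IsSymm := isHermitian_iff_isSymm.mp hW.isHermitian
    simp only [IsSymm, transpose_sum, transpose_smul, hH,
      (isSymm_mul_inv_mul_transpose hWsymm _).eq]
  have hcontract : κ * wnorm2 W R ≤ (R * (∑ j, q j • H j) * Rᵀ).trace :=
    hκ ▸ lammin_conj_mul_wnorm2_le (isHermitian_iff_isSymm.mp hWh.isHermitian)
      hWh.det_pos.ne'.isUnit hWh2 hmeanSymm R
  calc ∑ j, q j * wnorm2 W (J * (1 - Pr j) + jac f x * Pr j - jac f xs)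
      = wnorm2 W R - ∑ j, q j * (R * H j * Rᵀ).trace + ∑ j, q j * wnorm2 W (D * Pr j) := by
        simp only [hupdate, mul_add, mul_sub, Finset.sum_add_distrib, Finset.sum_sub_distrib,
          ← Finset.sum_mul, hq1, one_mul]
    _ ≤ (1 - κ) * wnorm2 W R + 2 * L₂ * (fbar x - fbar xs) := by
        linarith [hES2 x]

/-- Contraction of the Jacobian estimate: under the expected smoothness of the Jacobian,
the sketch-and-project updates `J⁺ⱼ = J(I − Πⱼ) + ∇F(x)Πⱼ` satisfy
`E‖J⁺ − ∇F(x*)‖²_{W⁻¹} ≤ (1 − κ)‖J − ∇F(x*)‖²_{W⁻¹} + 2L₂(f(x) − f(x*))`. -/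
theorem jacobian_estimate_contraction
    {d n m : ℕ}
    (W Wh : Matrix (Fin n) (Fin n) ℝ) (hW : W.PosDef)
    (hWh : Wh.PosDef) (hWh2 : Wh * Wh = W)
    (τs : Fin m → ℕ) (S : ∀ j, Matrix (Fin n) (Fin (τs j)) ℝ)
    (hS : ∀ j, IsUnit ((S j)ᵀ * W * S j))
    (q : Fin m → ℝ) (hq : ∀ j, 0 ≤ q j) (hq1 : ∑ j, q j = 1)
    (Pr H : Fin m → Matrix (Fin n) (Fin n) ℝ)
    (hPr : ∀ j, Pr j = S j * ((S j)ᵀ * W * S j)⁻¹ * (S j)ᵀ * W)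
    (hH : ∀ j, H j = S j * ((S j)ᵀ * W * S j)⁻¹ * (S j)ᵀ)
    (f : Fin n → (Fin d → ℝ) → ℝ) (hdiff : ∀ i, Differentiable ℝ (f i))
    (fbar : (Fin d → ℝ) → ℝ) (hfbar : ∀ x, fbar x = (1 / (n : ℝ)) * ∑ i, f i x)
    (xs : Fin d → ℝ)
    (κ : ℝ) (hκ : κ = lammin (Wh * (∑ j, q j • H j) * Wh))
    (L₂ : ℝ) (hL₂pos : 0 < L₂)
    (hES2 : ∀ x : Fin d → ℝ,
      ∑ j, q j * wnorm2 W ((jac f x - jac f xs) * Pr j)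
        ≤ 2 * L₂ * (fbar x - fbar xs)) :
    ∀ (J : Matrix (Fin d) (Fin n) ℝ) (x : Fin d → ℝ),
      ∑ j, q j * wnorm2 W (J * (1 - Pr j) + jac f x * Pr j - jac f xs)
        ≤ (1 - κ) * wnorm2 W (J - jac f xs) + 2 * L₂ * (fbar x - fbar xs) :=
  jacobian_estimate_contraction_general W Wh hW hWh hWh2 τs S hS q hq1 Pr H hPr hH f fbar xs κ hκ L₂
    hES2
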